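/- arXiv:2409.16428 — 3 statements merged into one kernel-verified Lean document; each statement's English description precedes it below -/
import Mathlib

section
/- If C is a Waldhausen category satisfying the extension axiom and such that whenever X → 0 is a weak equivalence then 0 → X is also a weak equivalence, then the horizontal weak equivalences of the associated squares category are exactly the trivial cofibrations of C (cofibrations that are also weak equivalences). -/
open CategoryTheory CategoryTheory.Limits

/-- A Waldhausen category: a pointed category with classes of cofibrations and weak
equivalences, such that the basepoint is a zero object, cofibrations contain the
isomorphisms and all maps out of the basepoint and are closed under composition,
pushouts along cofibrations exist and cofibrations are stable under pushout, and
weak equivalences contain the isomorphisms, are closed under composition and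
satisfy the gluing axiom. -/
structure Waldhausen (C : Type) [Category C] where
  cof : MorphismProperty C
  we : MorphismProperty C
  pt : C
  pt_isZero : IsZero pt
  cof_id : ∀ X : C, cof (𝟙 X)
  cof_comp : ∀ {X Y Z : C} (f : X ⟶ Y) (g : Y ⟶ Z), cof f → cof g → cof (f ≫ g)
  cof_iso : ∀ {X Y : C} (e : X ≅ Y), cof e.hom
  cof_from_pt : ∀ {X : C} (f : pt ⟶ X), cof f
  exists_pushout : ∀ {A B X : C} (f : A ⟶ B) (g : A ⟶ X), cof f →
    ∃ (P : C) (i : B ⟶ P) (j : X ⟶ P), IsPushout f g i j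
  cof_pushout : ∀ {A B X P : C} (f : A ⟶ B) (g : A ⟶ X) (i : B ⟶ P) (j : X ⟶ P),
    cof f → IsPushout f g i j → cof j
  we_id : ∀ X : C, we (𝟙 X)
  we_comp : ∀ {X Y Z : C} (f : X ⟶ Y) (g : Y ⟶ Z), we f → we g → we (f ≫ g)
  we_iso : ∀ {X Y : C} (e : X ≅ Y), we e.hom
  gluing : ∀ {A B X P A' B' X' P' : C} {f : A ⟶ B} {g : A ⟶ X} {i : B ⟶ P} {j : X ⟶ P}
    {f' : A' ⟶ B'} {g' : A' ⟶ X'} {i' : B' ⟶ P'} {j' : X' ⟶ P'}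
    (a : A ⟶ A') (b : B ⟶ B') (x : X ⟶ X') (p : P ⟶ P'),
    cof f → cof f' → IsPushout f g i j → IsPushout f' g' i' j' →
    we a → we b → we x →
    f ≫ b = a ≫ f' → g ≫ x = a ≫ g' → i ≫ p = b ≫ i' → j ≫ p = x ≫ j' →
    we p

variable {C : Type} [Category C]

/-- The unique map to the basepoint. -/
noncomputable def Waldhausen.toPt (W : Waldhausen C) (X : C) : X ⟶ W.pt :=
  W.pt_isZero.from_ X

/-- In the squares category associated to a Waldhausen category, a cofibration
`f : A ⟶ B` is a horizontal weak equivalence if the square with top row `f`,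
vertical edges `A ⟶ pt` and `B ⟶ pt`, and bottom row the identity of `pt` is
distinguished, i.e. the induced map `B/A = pt ⊔_A B ⟶ pt` is a weak
equivalence. -/
def Waldhausen.IsHorWE (W : Waldhausen C) {A B : C} (f : A ⟶ B) : Prop :=
  W.cof f ∧
    ∀ (P : C) (i : B ⟶ P) (j : W.pt ⟶ P), IsPushout f (W.toPt A) i j →
      ∀ d : P ⟶ W.pt, i ≫ d = W.toPt B → j ≫ d = 𝟙 W.pt → W.we d

namespace Waldhausen

variable (W : Waldhausen C)

/-- The extension axiom, with each cofiber sequence `A ↣ B ↠ B/A` encoded by a pushout square of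
`f : A ⟶ B` along `A ⟶ pt`. -/
def ExtensionAxiom : Prop :=
  ∀ {A B A' B' Q Q' : C} (f : A ⟶ B) (f' : A' ⟶ B') (a : A ⟶ A') (b : B ⟶ B')
    (q : B ⟶ Q) (z : W.pt ⟶ Q) (q' : B' ⟶ Q') (z' : W.pt ⟶ Q') (m : Q ⟶ Q'),
    W.cof f → W.cof f' → f ≫ b = a ≫ f' →
    IsPushout f (W.toPt A) q z → IsPushout f' (W.toPt A') q' z' →
    q ≫ m = b ≫ q' → z ≫ m = z' → W.we a → W.we m → W.we b

lemma isPushout_id_toPt (X : C) : IsPushout (𝟙 X) (W.toPt X) (W.toPt X) (𝟙 W.pt) :=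
  IsPushout.of_horiz_isIso ⟨by simp⟩

/-- Gluing applied to the map from the cofiber square of `f` to that of `𝟙 B`. -/
lemma isHorWE_of_cof_of_we {A B : C} {f : A ⟶ B} (hcof : W.cof f) (hwe : W.we f) :
    W.IsHorWE f :=
  ⟨hcof, fun _ _ _ hpo d hid hjd =>
    W.gluing f (𝟙 B) (𝟙 W.pt) d hcof (W.cof_id B) hpo (W.isPushout_id_toPt B) hwe
      (W.we_id B) (W.we_id W.pt) (by simp) (W.pt_isZero.eq_of_tgt _ _)
      (by simpa using hid) (by simpa using hjd)⟩

lemma IsHorWE.we_toPt {A B : C} {f : A ⟶ B} (hf : W.IsHorWE f) {P : C} {i : B ⟶ P}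
    {j : W.pt ⟶ P} (hpo : IsPushout f (W.toPt A) i j) : W.we (W.toPt P) :=
  hf.2 P i j hpo (W.toPt P) (W.pt_isZero.eq_of_tgt _ _) (W.pt_isZero.eq_of_tgt _ _)

/-- The extension axiom applied to the map from the cofiber square of `𝟙 A` to that of `f`:
on cofibers it is the inclusion `j : pt ⟶ B/A`. -/
lemma we_of_we_cofiberInclusion (hext : W.ExtensionAxiom) {A B : C} {f : A ⟶ B}
    (hcof : W.cof f) {P : C} {i : B ⟶ P} {j : W.pt ⟶ P} (hpo : IsPushout f (W.toPt A) i j)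
    (hj : W.we j) : W.we f :=
  hext (𝟙 A) f (𝟙 A) f (W.toPt A) (𝟙 W.pt) i j j (W.cof_id A) hcof (by simp)
    (W.isPushout_id_toPt A) hpo hpo.w.symm (by simp) (W.we_id A) hj

end Waldhausen

/-- If a Waldhausen category satisfies the extension axiom and has the property
that whenever `X ⟶ pt` is a weak equivalence then `pt ⟶ X` is one too, then the
horizontal weak equivalences of the associated squares category are exactly the
trivial cofibrations. -/
theorem horWE_iff_trivialCof (W : Waldhausen C)
    (ext : ∀ {A B A' B' Q Q' : C} (f : A ⟶ B) (f' : A' ⟶ B') (a : A ⟶ A') (b : B ⟶ B')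
      (q : B ⟶ Q) (z : W.pt ⟶ Q) (q' : B' ⟶ Q') (z' : W.pt ⟶ Q') (m : Q ⟶ Q'),
      W.cof f → W.cof f' → f ≫ b = a ≫ f' →
      IsPushout f (W.toPt A) q z → IsPushout f' (W.toPt A') q' z' →
      q ≫ m = b ≫ q' → z ≫ m = z' → W.we a → W.we m → W.we b)
    (sat : ∀ {X : C} (u : X ⟶ W.pt), W.we u → ∀ v : W.pt ⟶ X, W.we v) :
    ∀ {A B : C} (f : A ⟶ B), W.IsHorWE f ↔ (W.cof f ∧ W.we f) := by
  intro A B f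
  refine ⟨fun hf => ⟨hf.1, ?_⟩, fun ⟨hcof, hwe⟩ => W.isHorWE_of_cof_of_we hcof hwe⟩
  obtain ⟨P, i, j, hpo⟩ := W.exists_pushout f (W.toPt A) hf.1
  have hj : W.we j := sat (W.toPt P) (hf.we_toPt W hpo) j
  exact W.we_of_we_cofiberInclusion @ext hf.1 hpo hj
end

section
/- Every pointed stable double category is a stable squares category: the unique span and cospan completions extend to functorial sections s and t of the restriction functors from squares to spans and cospans respectively, with the natural transformations w : s∘i* ⇒ id and u : t∘j* ⇒ id given by identities. -/
/-- A flat double category: objects, horizontal and vertical morphisms each forming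
a category, and a `Prop`-valued predicate `Sq` picking out the (distinguished)
squares, closed under horizontal and vertical identities and pastings. Since a
square is determined by its boundary, flatness is built in. -/
structure FlatDoubleCat where
  Ob : Type
  /-- horizontal morphisms `A ↣ B` -/
  H : Ob → Ob → Type
  /-- vertical morphisms `A ↠ B` -/
  V : Ob → Ob → Type
  hid : ∀ A, H A A
  hcomp : ∀ {A B C}, H A B → H B C → H A C
  hid_comp : ∀ {A B} (f : H A B), hcomp (hid A) f = f
  hcomp_id : ∀ {A B} (f : H A B), hcomp f (hid B) = f
  hassoc : ∀ {A B C D} (f : H A B) (g : H B C) (h : H C D),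
    hcomp (hcomp f g) h = hcomp f (hcomp g h)
  vid : ∀ A, V A A
  vcomp : ∀ {A B C}, V A B → V B C → V A C
  vid_comp : ∀ {A B} (u : V A B), vcomp (vid A) u = u
  vcomp_id : ∀ {A B} (u : V A B), vcomp u (vid B) = u
  vassoc : ∀ {A B C D} (u : V A B) (v : V B C) (w : V C D),
    vcomp (vcomp u v) w = vcomp u (vcomp v w)
  /-- `Sq f a b k` says that the boundary with top `f : A ↣ B`, left `a : A ↠ X`,
  right `b : B ↠ Y` and bottom `k : X ↣ Y` is a square of the double category. -/
  Sq : ∀ {A B X Y}, H A B → V A X → V B Y → H X Y → Prop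
  sq_hid : ∀ {A X} (u : V A X), Sq (hid A) u u (hid X)
  sq_vid : ∀ {A B} (f : H A B), Sq f (vid A) (vid B) f
  sq_hcomp : ∀ {A B C X Y Z} {f : H A B} {g : H B C} {a : V A X} {b : V B Y} {c : V C Z}
    {f' : H X Y} {g' : H Y Z},
    Sq f a b f' → Sq g b c g' → Sq (hcomp f g) a c (hcomp f' g')
  sq_vcomp : ∀ {A B X Y P Q} {f : H A B} {a : V A X} {b : V B Y} {f' : H X Y}
    {a' : V X P} {b' : V Y Q} {f'' : H P Q},
    Sq f a b f' → Sq f' a' b' f'' → Sq f (vcomp a a') (vcomp b b') f''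

/-- A squares category: a flat pointed double category, i.e. a flat double category
with a distinguished object `O` which is initial in the horizontal category and
terminal in the vertical category. -/
structure SquaresCat extends FlatDoubleCat where
  O : Ob
  hfromO : ∀ A, H O A
  hfromO_uniq : ∀ {A} (f g : H O A), f = g
  vtoO : ∀ A, V A O
  vtoO_uniq : ∀ {A} (u v : V A O), u = v

/-- A horizontal morphism is a horizontal weak equivalence if it participates in a
square whose bottom row is the identity of `O`. -/
def SquaresCat.IsHWE (C : SquaresCat) {A B : C.Ob} (f : C.H A B) : Prop :=
  ∃ (a : C.V A C.O) (b : C.V B C.O), C.Sq f a b (C.hid C.O)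

/-- A vertical morphism is a vertical weak equivalence if it participates in a
square whose left edge is the identity of `O`. -/
def SquaresCat.IsVWE (C : SquaresCat) {A B : C.Ob} (u : C.V A B) : Prop :=
  ∃ (f : C.H C.O A) (g : C.H C.O B), C.Sq f (C.vid C.O) u g

/-- A completion of the span `(f, g)` to a distinguished square. -/
structure SpanCompl (C : FlatDoubleCat) {A B X : C.Ob} (f : C.H A B) (g : C.V A X) where
  Y : C.Ob
  h : C.V B Y
  k : C.H X Y
  sq : C.Sq f g h k

/-- A completion of the cospan `(h, k)` to a distinguished square. -/
structure CospanCompl (C : FlatDoubleCat) {B X Y : C.Ob} (h : C.V B Y) (k : C.H X Y) where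
  A : C.Ob
  f : C.H A B
  g : C.V A X
  sq : C.Sq f g h k

/-- The structure of a stable squares category on a squares category `C`:

(i) a functorial section `s` of the restriction from squares to spans, given by a
span-completion `s` together with its functorial action `sMap` on morphisms of
spans (vertical natural transformations), which produces morphisms of squares;

(ii) a vertical natural transformation `w : s ∘ i* ⇒ id`, whose component at a
square is the morphism of squares which is the identity on the span part;

(iii) a functorial section `t` of the restriction from squares to cospans; and

(iv) a vertical natural transformation `u : t ∘ j* ⇒ id` which is the identity on
the cospan part, whose remaining component is a vertical weak equivalence. -/
structure StableSquaresStr (C : SquaresCat) where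
  s : ∀ {A B X : C.Ob} (f : C.H A B) (g : C.V A X), SpanCompl C.toFlatDoubleCat f g
  sMap : ∀ {A B X A' B' X' : C.Ob} {f : C.H A B} {g : C.V A X} {f' : C.H A' B'}
      {g' : C.V A' X'} (α : C.V A A') (β : C.V B B') (γ : C.V X X'),
    C.Sq f α β f' → C.vcomp g γ = C.vcomp α g' → C.V (s f g).Y (s f' g').Y
  sMap_sq : ∀ {A B X A' B' X' : C.Ob} {f : C.H A B} {g : C.V A X} {f' : C.H A' B'}
      {g' : C.V A' X'} (α : C.V A A') (β : C.V B B') (γ : C.V X X')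
      (hsq : C.Sq f α β f') (hnat : C.vcomp g γ = C.vcomp α g'),
    C.Sq (s f g).k γ (sMap α β γ hsq hnat) (s f' g').k
  sMap_nat : ∀ {A B X A' B' X' : C.Ob} {f : C.H A B} {g : C.V A X} {f' : C.H A' B'}
      {g' : C.V A' X'} (α : C.V A A') (β : C.V B B') (γ : C.V X X')
      (hsq : C.Sq f α β f') (hnat : C.vcomp g γ = C.vcomp α g'),
    C.vcomp (s f g).h (sMap α β γ hsq hnat) = C.vcomp β (s f' g').h
  sMap_id : ∀ {A B X : C.Ob} (f : C.H A B) (g : C.V A X)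
      (hsq : C.Sq f (C.vid A) (C.vid B) f) (hnat : C.vcomp g (C.vid X) = C.vcomp (C.vid A) g),
    sMap (C.vid A) (C.vid B) (C.vid X) hsq hnat = C.vid (s f g).Y
  sMap_comp : ∀ {A B X A' B' X' A'' B'' X'' : C.Ob} {f : C.H A B} {g : C.V A X}
      {f' : C.H A' B'} {g' : C.V A' X'} {f'' : C.H A'' B''} {g'' : C.V A'' X''}
      (α : C.V A A') (β : C.V B B') (γ : C.V X X')
      (α' : C.V A' A'') (β' : C.V B' B'') (γ' : C.V X' X'')
      (hsq : C.Sq f α β f') (hnat : C.vcomp g γ = C.vcomp α g')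
      (hsq' : C.Sq f' α' β' f'') (hnat' : C.vcomp g' γ' = C.vcomp α' g'')
      (hsqc : C.Sq f (C.vcomp α α') (C.vcomp β β') f'')
      (hnatc : C.vcomp g (C.vcomp γ γ') = C.vcomp (C.vcomp α α') g''),
    sMap (C.vcomp α α') (C.vcomp β β') (C.vcomp γ γ') hsqc hnatc =
      C.vcomp (sMap α β γ hsq hnat) (sMap α' β' γ' hsq' hnat')
  w : ∀ {A B X Y : C.Ob} (f : C.H A B) (g : C.V A X) (h : C.V B Y) (k : C.H X Y),
    C.Sq f g h k → C.V (s f g).Y Y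
  w_sq : ∀ {A B X Y : C.Ob} (f : C.H A B) (g : C.V A X) (h : C.V B Y) (k : C.H X Y)
      (sq : C.Sq f g h k), C.Sq (s f g).k (C.vid X) (w f g h k sq) k
  w_nat : ∀ {A B X Y : C.Ob} (f : C.H A B) (g : C.V A X) (h : C.V B Y) (k : C.H X Y)
      (sq : C.Sq f g h k), C.vcomp (s f g).h (w f g h k sq) = h
  w_natural : ∀ {A B X Y A' B' X' Y' : C.Ob} {f : C.H A B} {g : C.V A X} {h : C.V B Y}
      {k : C.H X Y} {f' : C.H A' B'} {g' : C.V A' X'} {h' : C.V B' Y'} {k' : C.H X' Y'}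
      (sq : C.Sq f g h k) (sq' : C.Sq f' g' h' k')
      (α : C.V A A') (β : C.V B B') (γ : C.V X X') (δ : C.V Y Y')
      (hsq : C.Sq f α β f') (hnat : C.vcomp g γ = C.vcomp α g')
      (hsqb : C.Sq k γ δ k') (hnatr : C.vcomp h δ = C.vcomp β h'),
    C.vcomp (w f g h k sq) δ = C.vcomp (sMap α β γ hsq hnat) (w f' g' h' k' sq')
  t : ∀ {B X Y : C.Ob} (h : C.V B Y) (k : C.H X Y), CospanCompl C.toFlatDoubleCat h k
  tMap : ∀ {B X Y B' X' Y' : C.Ob} {h : C.V B Y} {k : C.H X Y} {h' : C.V B' Y'}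
      {k' : C.H X' Y'} (β : C.V B B') (γ : C.V X X') (δ : C.V Y Y'),
    C.Sq k γ δ k' → C.vcomp h δ = C.vcomp β h' → C.V (t h k).A (t h' k').A
  tMap_sq : ∀ {B X Y B' X' Y' : C.Ob} {h : C.V B Y} {k : C.H X Y} {h' : C.V B' Y'}
      {k' : C.H X' Y'} (β : C.V B B') (γ : C.V X X') (δ : C.V Y Y')
      (hsq : C.Sq k γ δ k') (hnat : C.vcomp h δ = C.vcomp β h'),
    C.Sq (t h k).f (tMap β γ δ hsq hnat) β (t h' k').f
  tMap_nat : ∀ {B X Y B' X' Y' : C.Ob} {h : C.V B Y} {k : C.H X Y} {h' : C.V B' Y'}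
      {k' : C.H X' Y'} (β : C.V B B') (γ : C.V X X') (δ : C.V Y Y')
      (hsq : C.Sq k γ δ k') (hnat : C.vcomp h δ = C.vcomp β h'),
    C.vcomp (t h k).g γ = C.vcomp (tMap β γ δ hsq hnat) (t h' k').g
  tMap_id : ∀ {B X Y : C.Ob} (h : C.V B Y) (k : C.H X Y)
      (hsq : C.Sq k (C.vid X) (C.vid Y) k) (hnat : C.vcomp h (C.vid Y) = C.vcomp (C.vid B) h),
    tMap (C.vid B) (C.vid X) (C.vid Y) hsq hnat = C.vid (t h k).A
  tMap_comp : ∀ {B X Y B' X' Y' B'' X'' Y'' : C.Ob} {h : C.V B Y} {k : C.H X Y}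
      {h' : C.V B' Y'} {k' : C.H X' Y'} {h'' : C.V B'' Y''} {k'' : C.H X'' Y''}
      (β : C.V B B') (γ : C.V X X') (δ : C.V Y Y')
      (β' : C.V B' B'') (γ' : C.V X' X'') (δ' : C.V Y' Y'')
      (hsq : C.Sq k γ δ k') (hnat : C.vcomp h δ = C.vcomp β h')
      (hsq' : C.Sq k' γ' δ' k'') (hnat' : C.vcomp h' δ' = C.vcomp β' h'')
      (hsqc : C.Sq k (C.vcomp γ γ') (C.vcomp δ δ') k'')
      (hnatc : C.vcomp h (C.vcomp δ δ') = C.vcomp (C.vcomp β β') h''),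
    tMap (C.vcomp β β') (C.vcomp γ γ') (C.vcomp δ δ') hsqc hnatc =
      C.vcomp (tMap β γ δ hsq hnat) (tMap β' γ' δ' hsq' hnat')
  u : ∀ {A B X Y : C.Ob} (f : C.H A B) (g : C.V A X) (h : C.V B Y) (k : C.H X Y),
    C.Sq f g h k → C.V (t h k).A A
  u_sq : ∀ {A B X Y : C.Ob} (f : C.H A B) (g : C.V A X) (h : C.V B Y) (k : C.H X Y)
      (sq : C.Sq f g h k), C.Sq (t h k).f (u f g h k sq) (C.vid B) f
  u_nat : ∀ {A B X Y : C.Ob} (f : C.H A B) (g : C.V A X) (h : C.V B Y) (k : C.H X Y)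
      (sq : C.Sq f g h k), (t h k).g = C.vcomp (u f g h k sq) g
  u_natural : ∀ {A B X Y A' B' X' Y' : C.Ob} {f : C.H A B} {g : C.V A X} {h : C.V B Y}
      {k : C.H X Y} {f' : C.H A' B'} {g' : C.V A' X'} {h' : C.V B' Y'} {k' : C.H X' Y'}
      (sq : C.Sq f g h k) (sq' : C.Sq f' g' h' k')
      (α : C.V A A') (β : C.V B B') (γ : C.V X X') (δ : C.V Y Y')
      (hsq : C.Sq f α β f') (hnat : C.vcomp g γ = C.vcomp α g')
      (hsqb : C.Sq k γ δ k') (hnatr : C.vcomp h δ = C.vcomp β h'),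
    C.vcomp (u f g h k sq) α = C.vcomp (tMap β γ δ hsqb hnatr) (u f' g' h' k' sq')
  u_vwe : ∀ {A B X Y : C.Ob} (f : C.H A B) (g : C.V A X) (h : C.V B Y) (k : C.H X Y)
      (sq : C.Sq f g h k), C.IsVWE (u f g h k sq)


section Aux

variable {C : SquaresCat}

lemma spanY (huq : ∀ {A B X : C.Ob} (f : C.H A B) (g : C.V A X)
      (S T : SpanCompl C.toFlatDoubleCat f g), S = T)
    {A B X Y1 Y2 : C.Ob} {f : C.H A B} {g : C.V A X}
    {h1 : C.V B Y1} {k1 : C.H X Y1} {h2 : C.V B Y2} {k2 : C.H X Y2}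
    (s1 : C.Sq f g h1 k1) (s2 : C.Sq f g h2 k2) : Y1 = Y2 :=
  congrArg SpanCompl.Y (huq f g ⟨Y1, h1, k1, s1⟩ ⟨Y2, h2, k2, s2⟩)

lemma spanHK (huq : ∀ {A B X : C.Ob} (f : C.H A B) (g : C.V A X)
      (S T : SpanCompl C.toFlatDoubleCat f g), S = T)
    {A B X Y : C.Ob} {f : C.H A B} {g : C.V A X}
    {h1 : C.V B Y} {k1 : C.H X Y} {h2 : C.V B Y} {k2 : C.H X Y}
    (s1 : C.Sq f g h1 k1) (s2 : C.Sq f g h2 k2) : h1 = h2 ∧ k1 = k2 := by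
  have e := huq f g ⟨Y, h1, k1, s1⟩ ⟨Y, h2, k2, s2⟩
  injection e with e1 e2 e3
  exact ⟨e2, e3⟩

/-- The chosen span completion. -/
noncomputable def sC (hex : ∀ {A B X : C.Ob} (f : C.H A B) (g : C.V A X),
      Nonempty (SpanCompl C.toFlatDoubleCat f g))
    {A B X : C.Ob} (f : C.H A B) (g : C.V A X) : SpanCompl C.toFlatDoubleCat f g :=
  (hex f g).some

lemma sMap_ex (hex : ∀ {A B X : C.Ob} (f : C.H A B) (g : C.V A X),
      Nonempty (SpanCompl C.toFlatDoubleCat f g))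
    (huq : ∀ {A B X : C.Ob} (f : C.H A B) (g : C.V A X)
      (S T : SpanCompl C.toFlatDoubleCat f g), S = T)
    {A B X A' B' X' : C.Ob} {f : C.H A B} {g : C.V A X} {f' : C.H A' B'}
    {g' : C.V A' X'} (al : C.V A A') (be : C.V B B') (ga : C.V X X')
    (hsq : C.Sq f al be f') (hnat : C.vcomp g ga = C.vcomp al g') :
    ∃ m : C.V (sC hex f g).Y (sC hex f' g').Y,
      C.Sq (sC hex f g).k ga m (sC hex f' g').k ∧
      C.vcomp (sC hex f g).h m = C.vcomp be (sC hex f' g').h := by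
  obtain ⟨Y2, m, k2, sq2⟩ := hex (sC hex f g).k ga
  have sqA : C.Sq f (C.vcomp g ga) (C.vcomp (sC hex f g).h m) k2 :=
    C.sq_vcomp (sC hex f g).sq sq2
  have sqB : C.Sq f (C.vcomp g ga) (C.vcomp be (sC hex f' g').h) (sC hex f' g').k := by
    rw [hnat]; exact C.sq_vcomp hsq (sC hex f' g').sq
  have eY : Y2 = (sC hex f' g').Y := spanY huq sqA sqB
  subst eY
  obtain ⟨hh, hk⟩ := spanHK huq sqA sqB
  exact ⟨m, hk ▸ sq2, hh⟩

/-- The functorial action of `s` on morphisms of spans. -/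
noncomputable def sMapC (hex : ∀ {A B X : C.Ob} (f : C.H A B) (g : C.V A X),
      Nonempty (SpanCompl C.toFlatDoubleCat f g))
    (huq : ∀ {A B X : C.Ob} (f : C.H A B) (g : C.V A X)
      (S T : SpanCompl C.toFlatDoubleCat f g), S = T)
    {A B X A' B' X' : C.Ob} {f : C.H A B} {g : C.V A X} {f' : C.H A' B'}
    {g' : C.V A' X'} (al : C.V A A') (be : C.V B B') (ga : C.V X X')
    (hsq : C.Sq f al be f') (hnat : C.vcomp g ga = C.vcomp al g') :
    C.V (sC hex f g).Y (sC hex f' g').Y :=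
  (sMap_ex hex huq al be ga hsq hnat).choose

lemma sMapC_sq (hex : ∀ {A B X : C.Ob} (f : C.H A B) (g : C.V A X),
      Nonempty (SpanCompl C.toFlatDoubleCat f g))
    (huq : ∀ {A B X : C.Ob} (f : C.H A B) (g : C.V A X)
      (S T : SpanCompl C.toFlatDoubleCat f g), S = T)
    {A B X A' B' X' : C.Ob} {f : C.H A B} {g : C.V A X} {f' : C.H A' B'}
    {g' : C.V A' X'} (al : C.V A A') (be : C.V B B') (ga : C.V X X')
    (hsq : C.Sq f al be f') (hnat : C.vcomp g ga = C.vcomp al g') :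
    C.Sq (sC hex f g).k ga (sMapC hex huq al be ga hsq hnat) (sC hex f' g').k :=
  (sMap_ex hex huq al be ga hsq hnat).choose_spec.1

lemma sMapC_nat (hex : ∀ {A B X : C.Ob} (f : C.H A B) (g : C.V A X),
      Nonempty (SpanCompl C.toFlatDoubleCat f g))
    (huq : ∀ {A B X : C.Ob} (f : C.H A B) (g : C.V A X)
      (S T : SpanCompl C.toFlatDoubleCat f g), S = T)
    {A B X A' B' X' : C.Ob} {f : C.H A B} {g : C.V A X} {f' : C.H A' B'}
    {g' : C.V A' X'} (al : C.V A A') (be : C.V B B') (ga : C.V X X')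
    (hsq : C.Sq f al be f') (hnat : C.vcomp g ga = C.vcomp al g') :
    C.vcomp (sC hex f g).h (sMapC hex huq al be ga hsq hnat) =
      C.vcomp be (sC hex f' g').h :=
  (sMap_ex hex huq al be ga hsq hnat).choose_spec.2

lemma w_ex (hex : ∀ {A B X : C.Ob} (f : C.H A B) (g : C.V A X),
      Nonempty (SpanCompl C.toFlatDoubleCat f g))
    (huq : ∀ {A B X : C.Ob} (f : C.H A B) (g : C.V A X)
      (S T : SpanCompl C.toFlatDoubleCat f g), S = T)
    {A B X Y : C.Ob} (f : C.H A B) (g : C.V A X) (h : C.V B Y) (k : C.H X Y)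
    (sq : C.Sq f g h k) :
    ∃ m : C.V (sC hex f g).Y Y,
      C.Sq (sC hex f g).k (C.vid X) m k ∧ C.vcomp (sC hex f g).h m = h ∧
      HEq m (C.vid Y) := by
  have e : (⟨Y, h, k, sq⟩ : SpanCompl C.toFlatDoubleCat f g) = sC hex f g :=
    huq f g _ _
  rw [← e]
  exact ⟨C.vid Y, C.sq_vid k, C.vcomp_id h, HEq.rfl⟩

/-- The component of the natural transformation `w`. -/
noncomputable def wC (hex : ∀ {A B X : C.Ob} (f : C.H A B) (g : C.V A X),
      Nonempty (SpanCompl C.toFlatDoubleCat f g))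
    (huq : ∀ {A B X : C.Ob} (f : C.H A B) (g : C.V A X)
      (S T : SpanCompl C.toFlatDoubleCat f g), S = T)
    {A B X Y : C.Ob} (f : C.H A B) (g : C.V A X) (h : C.V B Y) (k : C.H X Y)
    (sq : C.Sq f g h k) : C.V (sC hex f g).Y Y :=
  (w_ex hex huq f g h k sq).choose

lemma wC_sq (hex : ∀ {A B X : C.Ob} (f : C.H A B) (g : C.V A X),
      Nonempty (SpanCompl C.toFlatDoubleCat f g))
    (huq : ∀ {A B X : C.Ob} (f : C.H A B) (g : C.V A X)
      (S T : SpanCompl C.toFlatDoubleCat f g), S = T)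
    {A B X Y : C.Ob} (f : C.H A B) (g : C.V A X) (h : C.V B Y) (k : C.H X Y)
    (sq : C.Sq f g h k) :
    C.Sq (sC hex f g).k (C.vid X) (wC hex huq f g h k sq) k :=
  (w_ex hex huq f g h k sq).choose_spec.1

lemma wC_nat (hex : ∀ {A B X : C.Ob} (f : C.H A B) (g : C.V A X),
      Nonempty (SpanCompl C.toFlatDoubleCat f g))
    (huq : ∀ {A B X : C.Ob} (f : C.H A B) (g : C.V A X)
      (S T : SpanCompl C.toFlatDoubleCat f g), S = T)
    {A B X Y : C.Ob} (f : C.H A B) (g : C.V A X) (h : C.V B Y) (k : C.H X Y)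
    (sq : C.Sq f g h k) :
    C.vcomp (sC hex f g).h (wC hex huq f g h k sq) = h :=
  (w_ex hex huq f g h k sq).choose_spec.2.1

lemma wC_id (hex : ∀ {A B X : C.Ob} (f : C.H A B) (g : C.V A X),
      Nonempty (SpanCompl C.toFlatDoubleCat f g))
    (huq : ∀ {A B X : C.Ob} (f : C.H A B) (g : C.V A X)
      (S T : SpanCompl C.toFlatDoubleCat f g), S = T)
    {A B X Y : C.Ob} (f : C.H A B) (g : C.V A X) (h : C.V B Y) (k : C.H X Y)
    (sq : C.Sq f g h k) : HEq (wC hex huq f g h k sq) (C.vid Y) :=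
  (w_ex hex huq f g h k sq).choose_spec.2.2

lemma cospanA (hcuq : ∀ {B X Y : C.Ob} (h : C.V B Y) (k : C.H X Y)
      (S T : CospanCompl C.toFlatDoubleCat h k), S = T)
    {B X Y A1 A2 : C.Ob} {h : C.V B Y} {k : C.H X Y}
    {f1 : C.H A1 B} {g1 : C.V A1 X} {f2 : C.H A2 B} {g2 : C.V A2 X}
    (s1 : C.Sq f1 g1 h k) (s2 : C.Sq f2 g2 h k) : A1 = A2 :=
  congrArg CospanCompl.A (hcuq h k ⟨A1, f1, g1, s1⟩ ⟨A2, f2, g2, s2⟩)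

lemma cospanFG (hcuq : ∀ {B X Y : C.Ob} (h : C.V B Y) (k : C.H X Y)
      (S T : CospanCompl C.toFlatDoubleCat h k), S = T)
    {B X Y A : C.Ob} {h : C.V B Y} {k : C.H X Y}
    {f1 : C.H A B} {g1 : C.V A X} {f2 : C.H A B} {g2 : C.V A X}
    (s1 : C.Sq f1 g1 h k) (s2 : C.Sq f2 g2 h k) : f1 = f2 ∧ g1 = g2 := by
  have e := hcuq h k ⟨A, f1, g1, s1⟩ ⟨A, f2, g2, s2⟩
  injection e with e1 e2 e3
  exact ⟨e2, e3⟩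

/-- The chosen cospan completion. -/
noncomputable def tC (hcex : ∀ {B X Y : C.Ob} (h : C.V B Y) (k : C.H X Y),
      Nonempty (CospanCompl C.toFlatDoubleCat h k))
    {B X Y : C.Ob} (h : C.V B Y) (k : C.H X Y) : CospanCompl C.toFlatDoubleCat h k :=
  (hcex h k).some

lemma tMap_ex (hcex : ∀ {B X Y : C.Ob} (h : C.V B Y) (k : C.H X Y),
      Nonempty (CospanCompl C.toFlatDoubleCat h k))
    (hcuq : ∀ {B X Y : C.Ob} (h : C.V B Y) (k : C.H X Y)
      (S T : CospanCompl C.toFlatDoubleCat h k), S = T)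
    {B X Y B' X' Y' : C.Ob} {h : C.V B Y} {k : C.H X Y} {h' : C.V B' Y'}
    {k' : C.H X' Y'} (be : C.V B B') (ga : C.V X X') (de : C.V Y Y')
    (hsq : C.Sq k ga de k') (hnat : C.vcomp h de = C.vcomp be h') :
    ∃ m : C.V (tC hcex h k).A (tC hcex h' k').A,
      C.Sq (tC hcex h k).f m be (tC hcex h' k').f ∧
      C.vcomp (tC hcex h k).g ga = C.vcomp m (tC hcex h' k').g := by
  obtain ⟨A2, f2, g2, sq2⟩ := hcex be (tC hcex h' k').f
  have sqA : C.Sq f2 (C.vcomp g2 (tC hcex h' k').g) (C.vcomp h de) k' := by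
    rw [hnat]; exact C.sq_vcomp sq2 (tC hcex h' k').sq
  have sqB : C.Sq (tC hcex h k).f (C.vcomp (tC hcex h k).g ga) (C.vcomp h de) k' :=
    C.sq_vcomp (tC hcex h k).sq hsq
  have eA : A2 = (tC hcex h k).A := cospanA hcuq sqA sqB
  subst eA
  obtain ⟨hf, hg⟩ := cospanFG hcuq sqA sqB
  exact ⟨g2, hf ▸ sq2, hg.symm⟩

/-- The functorial action of `t` on morphisms of cospans. -/
noncomputable def tMapC (hcex : ∀ {B X Y : C.Ob} (h : C.V B Y) (k : C.H X Y),
      Nonempty (CospanCompl C.toFlatDoubleCat h k))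
    (hcuq : ∀ {B X Y : C.Ob} (h : C.V B Y) (k : C.H X Y)
      (S T : CospanCompl C.toFlatDoubleCat h k), S = T)
    {B X Y B' X' Y' : C.Ob} {h : C.V B Y} {k : C.H X Y} {h' : C.V B' Y'}
    {k' : C.H X' Y'} (be : C.V B B') (ga : C.V X X') (de : C.V Y Y')
    (hsq : C.Sq k ga de k') (hnat : C.vcomp h de = C.vcomp be h') :
    C.V (tC hcex h k).A (tC hcex h' k').A :=
  (tMap_ex hcex hcuq be ga de hsq hnat).choose

lemma tMapC_sq (hcex : ∀ {B X Y : C.Ob} (h : C.V B Y) (k : C.H X Y),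
      Nonempty (CospanCompl C.toFlatDoubleCat h k))
    (hcuq : ∀ {B X Y : C.Ob} (h : C.V B Y) (k : C.H X Y)
      (S T : CospanCompl C.toFlatDoubleCat h k), S = T)
    {B X Y B' X' Y' : C.Ob} {h : C.V B Y} {k : C.H X Y} {h' : C.V B' Y'}
    {k' : C.H X' Y'} (be : C.V B B') (ga : C.V X X') (de : C.V Y Y')
    (hsq : C.Sq k ga de k') (hnat : C.vcomp h de = C.vcomp be h') :
    C.Sq (tC hcex h k).f (tMapC hcex hcuq be ga de hsq hnat) be (tC hcex h' k').f :=
  (tMap_ex hcex hcuq be ga de hsq hnat).choose_spec.1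

lemma tMapC_nat (hcex : ∀ {B X Y : C.Ob} (h : C.V B Y) (k : C.H X Y),
      Nonempty (CospanCompl C.toFlatDoubleCat h k))
    (hcuq : ∀ {B X Y : C.Ob} (h : C.V B Y) (k : C.H X Y)
      (S T : CospanCompl C.toFlatDoubleCat h k), S = T)
    {B X Y B' X' Y' : C.Ob} {h : C.V B Y} {k : C.H X Y} {h' : C.V B' Y'}
    {k' : C.H X' Y'} (be : C.V B B') (ga : C.V X X') (de : C.V Y Y')
    (hsq : C.Sq k ga de k') (hnat : C.vcomp h de = C.vcomp be h') :
    C.vcomp (tC hcex h k).g ga =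
      C.vcomp (tMapC hcex hcuq be ga de hsq hnat) (tC hcex h' k').g :=
  (tMap_ex hcex hcuq be ga de hsq hnat).choose_spec.2

lemma u_ex (hcex : ∀ {B X Y : C.Ob} (h : C.V B Y) (k : C.H X Y),
      Nonempty (CospanCompl C.toFlatDoubleCat h k))
    (hcuq : ∀ {B X Y : C.Ob} (h : C.V B Y) (k : C.H X Y)
      (S T : CospanCompl C.toFlatDoubleCat h k), S = T)
    {A B X Y : C.Ob} (f : C.H A B) (g : C.V A X) (h : C.V B Y) (k : C.H X Y)
    (sq : C.Sq f g h k) :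
    ∃ m : C.V (tC hcex h k).A A,
      C.Sq (tC hcex h k).f m (C.vid B) f ∧ (tC hcex h k).g = C.vcomp m g ∧
      HEq m (C.vid A) ∧ C.IsVWE m := by
  have e : (⟨A, f, g, sq⟩ : CospanCompl C.toFlatDoubleCat h k) = tC hcex h k :=
    hcuq h k _ _
  rw [← e]
  exact ⟨C.vid A, C.sq_vid f, (C.vid_comp g).symm, HEq.rfl,
    ⟨C.hfromO A, C.hfromO A, C.sq_vid (C.hfromO A)⟩⟩

/-- The component of the natural transformation `u`. -/
noncomputable def uC (hcex : ∀ {B X Y : C.Ob} (h : C.V B Y) (k : C.H X Y),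
      Nonempty (CospanCompl C.toFlatDoubleCat h k))
    (hcuq : ∀ {B X Y : C.Ob} (h : C.V B Y) (k : C.H X Y)
      (S T : CospanCompl C.toFlatDoubleCat h k), S = T)
    {A B X Y : C.Ob} (f : C.H A B) (g : C.V A X) (h : C.V B Y) (k : C.H X Y)
    (sq : C.Sq f g h k) : C.V (tC hcex h k).A A :=
  (u_ex hcex hcuq f g h k sq).choose

lemma uC_sq (hcex : ∀ {B X Y : C.Ob} (h : C.V B Y) (k : C.H X Y),
      Nonempty (CospanCompl C.toFlatDoubleCat h k))
    (hcuq : ∀ {B X Y : C.Ob} (h : C.V B Y) (k : C.H X Y)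
      (S T : CospanCompl C.toFlatDoubleCat h k), S = T)
    {A B X Y : C.Ob} (f : C.H A B) (g : C.V A X) (h : C.V B Y) (k : C.H X Y)
    (sq : C.Sq f g h k) :
    C.Sq (tC hcex h k).f (uC hcex hcuq f g h k sq) (C.vid B) f :=
  (u_ex hcex hcuq f g h k sq).choose_spec.1

lemma uC_nat (hcex : ∀ {B X Y : C.Ob} (h : C.V B Y) (k : C.H X Y),
      Nonempty (CospanCompl C.toFlatDoubleCat h k))
    (hcuq : ∀ {B X Y : C.Ob} (h : C.V B Y) (k : C.H X Y)
      (S T : CospanCompl C.toFlatDoubleCat h k), S = T)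
    {A B X Y : C.Ob} (f : C.H A B) (g : C.V A X) (h : C.V B Y) (k : C.H X Y)
    (sq : C.Sq f g h k) :
    (tC hcex h k).g = C.vcomp (uC hcex hcuq f g h k sq) g :=
  (u_ex hcex hcuq f g h k sq).choose_spec.2.1

lemma uC_id (hcex : ∀ {B X Y : C.Ob} (h : C.V B Y) (k : C.H X Y),
      Nonempty (CospanCompl C.toFlatDoubleCat h k))
    (hcuq : ∀ {B X Y : C.Ob} (h : C.V B Y) (k : C.H X Y)
      (S T : CospanCompl C.toFlatDoubleCat h k), S = T)
    {A B X Y : C.Ob} (f : C.H A B) (g : C.V A X) (h : C.V B Y) (k : C.H X Y)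
    (sq : C.Sq f g h k) : HEq (uC hcex hcuq f g h k sq) (C.vid A) :=
  (u_ex hcex hcuq f g h k sq).choose_spec.2.2.1

lemma uC_vwe (hcex : ∀ {B X Y : C.Ob} (h : C.V B Y) (k : C.H X Y),
      Nonempty (CospanCompl C.toFlatDoubleCat h k))
    (hcuq : ∀ {B X Y : C.Ob} (h : C.V B Y) (k : C.H X Y)
      (S T : CospanCompl C.toFlatDoubleCat h k), S = T)
    {A B X Y : C.Ob} (f : C.H A B) (g : C.V A X) (h : C.V B Y) (k : C.H X Y)
    (sq : C.Sq f g h k) : C.IsVWE (uC hcex hcuq f g h k sq) :=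
  (u_ex hcex hcuq f g h k sq).choose_spec.2.2.2

end Aux
/-- Every pointed stable double category is a stable squares category: if every
span and every cospan admits a unique completion to a distinguished square, then
the unique completions extend to functorial sections `s` and `t` of the
restrictions from squares to spans and to cospans, and the structural natural
transformations `w : s ∘ i* ⇒ id` and `u : t ∘ j* ⇒ id` are given by identities. -/
theorem stableDoubleCat_isStableSquaresCat (C : SquaresCat)
    (hspan_ex : ∀ {A B X : C.Ob} (f : C.H A B) (g : C.V A X),
      Nonempty (SpanCompl C.toFlatDoubleCat f g))
    (hspan_uniq : ∀ {A B X : C.Ob} (f : C.H A B) (g : C.V A X)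
      (S T : SpanCompl C.toFlatDoubleCat f g), S = T)
    (hcospan_ex : ∀ {B X Y : C.Ob} (h : C.V B Y) (k : C.H X Y),
      Nonempty (CospanCompl C.toFlatDoubleCat h k))
    (hcospan_uniq : ∀ {B X Y : C.Ob} (h : C.V B Y) (k : C.H X Y)
      (S T : CospanCompl C.toFlatDoubleCat h k), S = T) :
    ∃ St : StableSquaresStr C,
      (∀ {A B X Y : C.Ob} (f : C.H A B) (g : C.V A X) (h : C.V B Y) (k : C.H X Y)
        (sq : C.Sq f g h k), (St.s f g).Y = Y ∧ HEq (St.w f g h k sq) (C.vid Y)) ∧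
      (∀ {A B X Y : C.Ob} (f : C.H A B) (g : C.V A X) (h : C.V B Y) (k : C.H X Y)
        (sq : C.Sq f g h k), (St.t h k).A = A ∧ HEq (St.u f g h k sq) (C.vid A)) := by
  refine ⟨{
    s := sC hspan_ex
    sMap := sMapC hspan_ex hspan_uniq
    sMap_sq := sMapC_sq hspan_ex hspan_uniq
    sMap_nat := sMapC_nat hspan_ex hspan_uniq
    sMap_id := fun f g hsq hnat =>
      (spanHK hspan_uniq (sMapC_sq hspan_ex hspan_uniq _ _ _ hsq hnat)
        (C.sq_vid (sC hspan_ex f g).k)).1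
    sMap_comp := by
      intro A B X A' B' X' A'' B'' X'' f g f' g' f'' g'' α β γ α' β' γ'
        hsq hnat hsq' hnat' hsqc hnatc
      exact (spanHK hspan_uniq (sMapC_sq hspan_ex hspan_uniq _ _ _ hsqc hnatc)
        (C.sq_vcomp (sMapC_sq hspan_ex hspan_uniq _ _ _ hsq hnat)
          (sMapC_sq hspan_ex hspan_uniq _ _ _ hsq' hnat'))).1
    w := wC hspan_ex hspan_uniq
    w_sq := wC_sq hspan_ex hspan_uniq
    w_nat := wC_nat hspan_ex hspan_uniq
    w_natural := by
      intro A B X Y A' B' X' Y' f g h k f' g' h' k' sq sq' α β γ δ hsq hnat hsqb hnatr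
      have sqL : C.Sq (sC hspan_ex f g).k γ
          (C.vcomp (wC hspan_ex hspan_uniq f g h k sq) δ) k' := by
        have := C.sq_vcomp (wC_sq hspan_ex hspan_uniq f g h k sq) hsqb
        rwa [C.vid_comp] at this
      have sqR : C.Sq (sC hspan_ex f g).k γ
          (C.vcomp (sMapC hspan_ex hspan_uniq α β γ hsq hnat)
            (wC hspan_ex hspan_uniq f' g' h' k' sq')) k' := by
        have := C.sq_vcomp (sMapC_sq hspan_ex hspan_uniq α β γ hsq hnat)
          (wC_sq hspan_ex hspan_uniq f' g' h' k' sq')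
        rwa [C.vcomp_id] at this
      exact (spanHK hspan_uniq sqL sqR).1
    t := tC hcospan_ex
    tMap := tMapC hcospan_ex hcospan_uniq
    tMap_sq := tMapC_sq hcospan_ex hcospan_uniq
    tMap_nat := tMapC_nat hcospan_ex hcospan_uniq
    tMap_id := fun h k hsq hnat =>
      (cospanFG hcospan_uniq (tMapC_sq hcospan_ex hcospan_uniq _ _ _ hsq hnat)
        (C.sq_vid (tC hcospan_ex h k).f)).2
    tMap_comp := by
      intro B X Y B' X' Y' B'' X'' Y'' h k h' k' h'' k'' β γ δ β' γ' δ'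
        hsq hnat hsq' hnat' hsqc hnatc
      exact (cospanFG hcospan_uniq (tMapC_sq hcospan_ex hcospan_uniq _ _ _ hsqc hnatc)
        (C.sq_vcomp (tMapC_sq hcospan_ex hcospan_uniq _ _ _ hsq hnat)
          (tMapC_sq hcospan_ex hcospan_uniq _ _ _ hsq' hnat'))).2
    u := uC hcospan_ex hcospan_uniq
    u_sq := uC_sq hcospan_ex hcospan_uniq
    u_nat := uC_nat hcospan_ex hcospan_uniq
    u_natural := by
      intro A B X Y A' B' X' Y' f g h k f' g' h' k' sq sq' α β γ δ hsq hnat hsqb hnatr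
      have sqL : C.Sq (tC hcospan_ex h k).f
          (C.vcomp (uC hcospan_ex hcospan_uniq f g h k sq) α) β f' := by
        have := C.sq_vcomp (uC_sq hcospan_ex hcospan_uniq f g h k sq) hsq
        rwa [C.vid_comp] at this
      have sqR : C.Sq (tC hcospan_ex h k).f
          (C.vcomp (tMapC hcospan_ex hcospan_uniq β γ δ hsqb hnatr)
            (uC hcospan_ex hcospan_uniq f' g' h' k' sq')) β f' := by
        have := C.sq_vcomp (tMapC_sq hcospan_ex hcospan_uniq β γ δ hsqb hnatr)
          (uC_sq hcospan_ex hcospan_uniq f' g' h' k' sq')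
        rwa [C.vcomp_id] at this
      exact (cospanFG hcospan_uniq sqL sqR).2
    u_vwe := uC_vwe hcospan_ex hcospan_uniq }, ?_, ?_⟩
  · intro A B X Y f g h k sq
    exact ⟨spanY hspan_uniq (sC hspan_ex f g).sq sq, wC_id hspan_ex hspan_uniq f g h k sq⟩
  · intro A B X Y f g h k sq
    exact ⟨cospanA hcospan_uniq (tC hcospan_ex h k).sq sq,
      uC_id hcospan_ex hcospan_uniq f g h k sq⟩
end

section
/- Let C be a squares category in which all vertical weak equivalences are invertible and such that for every distinguished square with invertible vertical edges g : A ↠ C and h : B ↠ D, the boundary (k, g⁻¹, h⁻¹, f) obtained by inverting the vertical edges is again a distinguished square. Then every category S^□_n(C) in the S^□-construction is a groupoid. -/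
/-- An object of `S^□_n(C)`: a staircase diagram, encoded as a grid of objects
`obj i j` (with `obj i j = O` whenever `j ≤ i`, i.e. on and below the diagonal),
horizontal morphisms along the rows, vertical morphisms along the columns,
functorially, such that every resulting boundary is a distinguished square. -/
structure SObj (C : SquaresCat) (n : ℕ) where
  obj : Fin (n + 1) → Fin (n + 1) → C.Ob
  diag : ∀ i j : Fin (n + 1), j ≤ i → obj i j = C.O
  hmor : ∀ (i j j' : Fin (n + 1)), j ≤ j' → C.H (obj i j) (obj i j')
  vmor : ∀ (i i' j : Fin (n + 1)), i ≤ i' → C.V (obj i j) (obj i' j)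
  hmor_refl : ∀ i j, hmor i j j le_rfl = C.hid (obj i j)
  hmor_trans : ∀ i j j' j'' (h : j ≤ j') (h' : j' ≤ j''),
    hmor i j j'' (h.trans h') = C.hcomp (hmor i j j' h) (hmor i j' j'' h')
  vmor_refl : ∀ i j, vmor i i j le_rfl = C.vid (obj i j)
  vmor_trans : ∀ i i' i'' j (h : i ≤ i') (h' : i' ≤ i''),
    vmor i i'' j (h.trans h') = C.vcomp (vmor i i' j h) (vmor i' i'' j h')
  issq : ∀ i i' j j' (hi : i ≤ i') (hj : j ≤ j'),
    C.Sq (hmor i j j' hj) (vmor i i' j hi) (vmor i i' j' hi) (hmor i' j j' hj)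

/-- A morphism of `S^□_n(C)`: a vertical natural transformation of staircase
diagrams, with identity components on the diagonal part, such that every boundary
with two horizontal and two vertical edges is a distinguished square and every
all-vertical square commutes. -/
structure SHom (C : SquaresCat) (n : ℕ) (X Y : SObj C n) where
  app : ∀ i j : Fin (n + 1), C.V (X.obj i j) (Y.obj i j)
  app_diag : ∀ i j : Fin (n + 1), j ≤ i → HEq (app i j) (C.vid C.O)
  sq_h : ∀ i j j' (h : j ≤ j'),
    C.Sq (X.hmor i j j' h) (app i j) (app i j') (Y.hmor i j j' h)
  nat_v : ∀ i i' j (h : i ≤ i'),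
    C.vcomp (X.vmor i i' j h) (app i' j) = C.vcomp (app i j) (Y.vmor i i' j h)

namespace FlatDoubleCat

variable (C : FlatDoubleCat)

lemma vcomp_eq_vcomp_of_comm {A B A' B' : C.Ob} {u : C.V A A'} {v : C.V A' A}
    {u' : C.V B B'} {v' : C.V B' B} {a : C.V A B} {b : C.V A' B'}
    (hvu : C.vcomp v u = C.vid A') (huv' : C.vcomp u' v' = C.vid B)
    (h : C.vcomp a u' = C.vcomp u b) :
    C.vcomp b v' = C.vcomp v a :=
  calc C.vcomp b v' = C.vcomp (C.vcomp v u) (C.vcomp b v') := by rw [hvu, C.vid_comp]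
    _ = C.vcomp v (C.vcomp (C.vcomp u b) v') := by simp only [C.vassoc]
    _ = C.vcomp v a := by rw [← h, C.vassoc, huv', C.vcomp_id]

lemma heq_vid_of_vcomp_eq_vid {O A B : C.Ob} {u : C.V A B} {v : C.V B A}
    (hA : A = O) (hB : B = O) (hu : HEq u (C.vid O)) (huv : C.vcomp u v = C.vid A) :
    HEq v (C.vid O) := by
  subst hA hB
  rw [eq_of_heq hu, C.vid_comp] at huv
  exact heq_of_eq huv

end FlatDoubleCat

namespace SquaresCat

variable (C : SquaresCat)

lemma isVWE_of_sq {A B P Q : C.Ob} {f : C.H A P} {g : C.H B Q} {a : C.V A B} {u : C.V P Q}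
    (sq : C.Sq f a u g) (hA : A = C.O) (hB : B = C.O) (ha : HEq a (C.vid C.O)) :
    C.IsVWE u := by
  subst hA hB
  exact ⟨f, g, eq_of_heq ha ▸ sq⟩

end SquaresCat

namespace SHom

variable {C : SquaresCat} {n : ℕ} {X Y : SObj C n}

/-- Below the diagonal the component is `vid O`; above it, it is the right edge of the
square whose left edge is the diagonal component `vid O`. -/
lemma isVWE_app (τ : SHom C n X Y) (i j : Fin (n + 1)) : C.IsVWE (τ.app i j) := by
  rcases le_total j i with h | h
  · exact C.isVWE_of_sq (C.sq_hid _) (X.diag i j h) (Y.diag i j h) (τ.app_diag i j h)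
  · exact C.isVWE_of_sq (τ.sq_h i i j h) (X.diag i i le_rfl) (Y.diag i i le_rfl)
      (τ.app_diag i i le_rfl)

def inv (τ : SHom C n X Y)
    (hsqinv : ∀ {A B X Y : C.Ob} (f : C.H A B) (g : C.V A X) (h : C.V B Y) (k : C.H X Y)
      (g' : C.V X A) (h' : C.V Y B),
      C.Sq f g h k → C.vcomp g g' = C.vid A → C.vcomp g' g = C.vid X →
      C.vcomp h h' = C.vid B → C.vcomp h' h = C.vid Y → C.Sq k g' h' f)
    (σ : ∀ i j, C.V (Y.obj i j) (X.obj i j))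
    (hτσ : ∀ i j, C.vcomp (τ.app i j) (σ i j) = C.vid (X.obj i j))
    (hστ : ∀ i j, C.vcomp (σ i j) (τ.app i j) = C.vid (Y.obj i j)) :
    SHom C n Y X where
  app := σ
  app_diag i j h :=
    C.heq_vid_of_vcomp_eq_vid (X.diag i j h) (Y.diag i j h) (τ.app_diag i j h) (hτσ i j)
  sq_h i j j' h :=
    hsqinv _ _ _ _ _ _ (τ.sq_h i j j' h) (hτσ i j) (hστ i j) (hτσ i j') (hστ i j')
  nat_v i i' j h :=
    C.vcomp_eq_vcomp_of_comm (hστ i j) (hτσ i' j) (τ.nat_v i i' j h)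

end SHom

/-- If `C` is a squares category in which all vertical weak equivalences are
invertible, and inverting the (invertible) vertical edges of any distinguished
square again yields a distinguished square, then every `S^□_n(C)` is a groupoid:
every morphism admits a componentwise inverse morphism. -/
theorem sdot_isGroupoid (C : SquaresCat)
    (hinv : ∀ {A B : C.Ob} (u : C.V A B), C.IsVWE u →
      ∃ v : C.V B A, C.vcomp u v = C.vid A ∧ C.vcomp v u = C.vid B)
    (hsqinv : ∀ {A B X Y : C.Ob} (f : C.H A B) (g : C.V A X) (h : C.V B Y) (k : C.H X Y)
      (g' : C.V X A) (h' : C.V Y B),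
      C.Sq f g h k → C.vcomp g g' = C.vid A → C.vcomp g' g = C.vid X →
      C.vcomp h h' = C.vid B → C.vcomp h' h = C.vid Y → C.Sq k g' h' f)
    (n : ℕ) (X Y : SObj C n) (τ : SHom C n X Y) :
    ∃ σ : SHom C n Y X,
      (∀ i j, C.vcomp (τ.app i j) (σ.app i j) = C.vid (X.obj i j)) ∧
      (∀ i j, C.vcomp (σ.app i j) (τ.app i j) = C.vid (Y.obj i j)) := by
  choose σ hτσ hστ using fun i j => hinv (τ.app i j) (τ.isVWE_app i j)
  exact ⟨τ.inv hsqinv σ hτσ hστ, hτσ, hστ⟩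
end
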